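/- arXiv:2405.10520 — 2 statements merged into one kernel-verified Lean document; each statement's English description precedes it below -/
import Mathlib

section
/- Let Ac : 𝓗¹⊗S¹ → 𝓗⁰⊗S² be the linear map defined by Ac = Σ_k A_k ⊗ c_k, where 𝓗^q is the span of degree-q Hermite polynomials in n variables and S^p = Sym^p((ℝⁿ)*). Then ker(Ac) is spanned by the vectors H_k e^ℓ − H_ℓ e^k for k < ℓ, and each such vector also lies in the kernel of Aa = Σ_k A_k ⊗ a_k; consequently dim(ker Aa ∩ ker Ac) restricted to 𝓗¹⊗S¹ equals C(n,2). -/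
open MvPolynomial

/-- The physicists' Hermite polynomial `H_k`, satisfying the Rodrigues formula
`H_k(t) = (−1)^k e^{t²} (d/dt)^k e^{−t²}` (equivalently, `H_0 = 1`,
`H_{k+1} = 2X·H_k − H_k'`). -/
noncomputable def physHermite : ℕ → Polynomial ℝ
  | 0 => 1
  | (k + 1) => 2 * (Polynomial.X * physHermite k) - Polynomial.derivative (physHermite k)

/-- The Hermite polynomial `H_I = H_{i₁}(y₁)⋯H_{iₙ}(yₙ)`, as a polynomial in the
variables `y₁,…,yₙ` (the `Sum.inl` variables) of `ℝ[y₁,…,yₙ,e¹,…,eⁿ]`. -/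
noncomputable def HI {n : ℕ} (I : Fin n → ℕ) : MvPolynomial (Fin n ⊕ Fin n) ℝ :=
  ∏ i, Polynomial.aeval (X (Sum.inl i)) (physHermite (I i))

/-- The monomial `e^J = (e¹)^{j₁}⋯(eⁿ)^{jₙ}` in the symmetric-algebra variables
(the `Sum.inr` variables), spanning `S^p = Sym^p((ℝⁿ)*)` for `|J| = p`. -/
noncomputable def eJ {n : ℕ} (J : Fin n → ℕ) : MvPolynomial (Fin n ⊕ Fin n) ℝ :=
  ∏ i, (X (Sum.inr i) : MvPolynomial (Fin n ⊕ Fin n) ℝ) ^ (J i)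

/-- `𝓗^q ⊗ S^p`: the span of the vectors `H_I e^J` with `|I| = q`, `|J| = p`. -/
noncomputable def HS (n q p : ℕ) : Submodule ℝ (MvPolynomial (Fin n ⊕ Fin n) ℝ) :=
  Submodule.span ℝ
    {x | ∃ I J : Fin n → ℕ, (∑ i, I i) = q ∧ (∑ i, J i) = p ∧ x = HI I * eJ J}

/-- The operator `Ac = Σ_k A_k ⊗ c_k`, where `A_k = (1/2)∂_{y_k}` and `c_k` is
symmetric multiplication by `e^k`. -/
noncomputable def acL (n : ℕ) :
    MvPolynomial (Fin n ⊕ Fin n) ℝ →ₗ[ℝ] MvPolynomial (Fin n ⊕ Fin n) ℝ :=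
  ∑ k : Fin n, (1 / 2 : ℝ) •
    ((pderiv (Sum.inl k)).toLinearMap ∘ₗ LinearMap.mulLeft ℝ (X (Sum.inr k)))

/-- The operator `Aa = Σ_k A_k ⊗ a_k`, where `A_k = (1/2)∂_{y_k}` and `a_k = ∂_{e_k}` is
contraction with `e_k`. -/
noncomputable def aaL (n : ℕ) :
    MvPolynomial (Fin n ⊕ Fin n) ℝ →ₗ[ℝ] MvPolynomial (Fin n ⊕ Fin n) ℝ :=
  ∑ k : Fin n, (1 / 2 : ℝ) •
    ((pderiv (Sum.inl k)).toLinearMap ∘ₗ (pderiv (Sum.inr k)).toLinearMap)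

lemma HI_single {n : ℕ} (k : Fin n) : HI (Pi.single k 1) = 2 * X (Sum.inl k) := by
  rw [HI, Fintype.prod_eq_single k]
  · simp only [Pi.single_eq_same, physHermite, map_sub, map_mul, map_one, Polynomial.aeval_X, map_ofNat]; simp [physHermite]
  · intro j hj
    simp [Pi.single_eq_of_ne hj, physHermite]

lemma eJ_single {n : ℕ} (k : Fin n) : eJ (Pi.single k 1) = X (Sum.inr k) := by
  rw [eJ, Fintype.prod_eq_single k]
  · simp
  · intro j hj
    simp [Pi.single_eq_of_ne hj]




lemma acL_b {n : ℕ} (k ℓ : Fin n) :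
    acL n (X (Sum.inl k) * X (Sum.inr ℓ)) = (1/2 : ℝ) • (X (Sum.inr k) * X (Sum.inr ℓ)) := by
  rw [acL, LinearMap.sum_apply, Fintype.sum_eq_single k]
  · simp [pderiv_mul, pderiv_X, Pi.single_apply]
  · intro m hm
    simp [pderiv_mul, pderiv_X, Pi.single_apply, hm, Sum.inl.injEq]

lemma aaL_b {n : ℕ} (k ℓ : Fin n) :
    aaL n (X (Sum.inl k) * X (Sum.inr ℓ)) = if k = ℓ then ((1/2 : ℝ) • 1) else 0 := by
  rw [aaL, LinearMap.sum_apply]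
  by_cases h : k = ℓ
  · subst h
    rw [Fintype.sum_eq_single k]
    · simp [pderiv_mul, pderiv_X, Pi.single_apply]
    · intro m hm
      simp [pderiv_mul, pderiv_X, Pi.single_apply, hm]
  · rw [if_neg h]
    apply Finset.sum_eq_zero
    intro m _
    by_cases hm : m = ℓ
    · subst hm
      simp [pderiv_mul, pderiv_X, Pi.single_apply, h]
    · simp [pderiv_mul, pderiv_X, Pi.single_apply, hm]
/-- exponent of the monomial `y_k e_ℓ` -/
noncomputable def mExp {n : ℕ} (k ℓ : Fin n) : (Fin n ⊕ Fin n) →₀ ℕ :=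
  Finsupp.single (Sum.inl k) 1 + Finsupp.single (Sum.inr ℓ) 1

lemma b_eq_monomial {n : ℕ} (k ℓ : Fin n) :
    (X (Sum.inl k) * X (Sum.inr ℓ) : MvPolynomial (Fin n ⊕ Fin n) ℝ) = monomial (mExp k ℓ) 1 := by
  rw [mExp, X, X, monomial_mul, one_mul]

lemma mExp_inj {n : ℕ} {k ℓ k' ℓ' : Fin n} : mExp k ℓ = mExp k' ℓ' ↔ k = k' ∧ ℓ = ℓ' := by
  rw [mExp, mExp, Finsupp.single_add_single_eq_single_add_single one_ne_zero one_ne_zero]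
  simp [Sum.inl.injEq, Sum.inr.injEq]

lemma coeff_b {n : ℕ} (k ℓ k' ℓ' : Fin n) :
    coeff (mExp k ℓ) (X (Sum.inl k') * X (Sum.inr ℓ') : MvPolynomial (Fin n ⊕ Fin n) ℝ) =
      if k' = k ∧ ℓ' = ℓ then 1 else 0 := by
  rw [b_eq_monomial, coeff_monomial]
  simp only [mExp_inj]

/-- exponent of the monomial `e_k e_ℓ` -/
noncomputable def eExp {n : ℕ} (k ℓ : Fin n) : (Fin n ⊕ Fin n) →₀ ℕ :=
  Finsupp.single (Sum.inr k) 1 + Finsupp.single (Sum.inr ℓ) 1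

lemma ee_eq_monomial {n : ℕ} (k ℓ : Fin n) :
    (X (Sum.inr k) * X (Sum.inr ℓ) : MvPolynomial (Fin n ⊕ Fin n) ℝ) = monomial (eExp k ℓ) 1 := by
  rw [eExp, X, X, monomial_mul, one_mul]

lemma eExp_inj {n : ℕ} {k ℓ k' ℓ' : Fin n} :
    eExp k ℓ = eExp k' ℓ' ↔ (k = k' ∧ ℓ = ℓ') ∨ (k = ℓ' ∧ ℓ = k') := by
  rw [eExp, eExp, Finsupp.single_add_single_eq_single_add_single one_ne_zero one_ne_zero]
  simp [Sum.inr.injEq]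

lemma sum_eq_one_single {n : ℕ} {f : Fin n → ℕ} (h : (∑ i, f i) = 1) :
    ∃ k, f = Pi.single k 1 := by
  obtain ⟨k, hk⟩ : ∃ k, f k ≠ 0 := by
    by_contra hc
    push_neg at hc
    simp [hc] at h
  have h2 : f k + ∑ i ∈ Finset.univ.erase k, f i = 1 := by
    rw [Finset.add_sum_erase _ f (Finset.mem_univ k)]
    exact h
  have hk1 : f k = 1 := by omega
  have hrest : ∑ i ∈ Finset.univ.erase k, f i = 0 := by omega
  refine ⟨k, funext fun j => ?_⟩
  by_cases hj : j = k
  · subst hj; simp [hk1]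
  · rw [Pi.single_eq_of_ne hj]
    exact Finset.sum_eq_zero_iff.mp hrest j (Finset.mem_erase.mpr ⟨hj, Finset.mem_univ j⟩)


/-- the basis vectors `y_k e_ℓ` -/
noncomputable def bkl {n : ℕ} (p : Fin n × Fin n) : MvPolynomial (Fin n ⊕ Fin n) ℝ :=
  X (Sum.inl p.1) * X (Sum.inr p.2)

lemma two_mul_smul {n : ℕ} (p : MvPolynomial (Fin n ⊕ Fin n) ℝ) :
    (2 : MvPolynomial (Fin n ⊕ Fin n) ℝ) * p = (2 : ℝ) • p := by
  rw [smul_eq_C_mul, map_ofNat]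

lemma coeff_bkl {n : ℕ} (k ℓ : Fin n) (q : Fin n × Fin n) :
    coeff (mExp k ℓ) (bkl q) = if q = (k, ℓ) then 1 else 0 := by
  rw [bkl, coeff_b]
  congr 1
  simp [Prod.ext_iff]

lemma HS11_eq (n : ℕ) : HS n 1 1 = Submodule.span ℝ (Set.range fun p : Fin n × Fin n =>
    (2 : MvPolynomial (Fin n ⊕ Fin n) ℝ) * bkl p) := by
  unfold HS
  congr 1
  ext x
  constructor
  · rintro ⟨I, J, hI, hJ, rfl⟩
    obtain ⟨k, rfl⟩ := sum_eq_one_single hI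
    obtain ⟨ℓ, rfl⟩ := sum_eq_one_single hJ
    exact ⟨(k, ℓ), by simp only [HI_single, eJ_single, bkl]; ring⟩
  · rintro ⟨⟨k, ℓ⟩, rfl⟩
    refine ⟨Pi.single k 1, Pi.single ℓ 1, ?_, ?_, ?_⟩
    · simp [Finset.sum_pi_single']
    · simp [Finset.sum_pi_single']
    · simp only [HI_single, eJ_single, bkl]; ring

lemma repr_HS11 {n : ℕ} {x : MvPolynomial (Fin n ⊕ Fin n) ℝ} (hx : x ∈ HS n 1 1) :
    x = ∑ p : Fin n × Fin n, coeff (mExp p.1 p.2) x • bkl p := by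
  rw [HS11_eq] at hx
  set T : MvPolynomial (Fin n ⊕ Fin n) ℝ →ₗ[ℝ] MvPolynomial (Fin n ⊕ Fin n) ℝ :=
    LinearMap.id - ∑ p : Fin n × Fin n, (lcoeff ℝ (mExp p.1 p.2)).smulRight (bkl p) with hT
  have key : Submodule.span ℝ (Set.range fun p : Fin n × Fin n =>
      (2 : MvPolynomial (Fin n ⊕ Fin n) ℝ) * bkl p) ≤ LinearMap.ker T := by
    rw [Submodule.span_le]
    rintro _ ⟨⟨k, ℓ⟩, rfl⟩
    simp only [SetLike.mem_coe, LinearMap.mem_ker, hT, LinearMap.sub_apply, LinearMap.id_apply,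
      LinearMap.sum_apply, LinearMap.smulRight_apply, lcoeff_apply, sub_eq_zero]
    rw [Finset.sum_eq_single (k, ℓ)]
    · rw [two_mul_smul, coeff_smul, coeff_bkl, if_pos rfl]
      simp
    · rintro q _ hne
      rw [two_mul_smul, coeff_smul, coeff_bkl]
      have h2 : ¬ ((k, ℓ) = (q.1, q.2)) := by
        simpa [Prod.ext_iff, eq_comm] using hne
      rw [if_neg h2]
      simp
    · intro h; exact absurd (Finset.mem_univ _) h
  have hx0 : T x = 0 := key hx
  simp only [hT, LinearMap.sub_apply, LinearMap.id_apply, LinearMap.sum_apply,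
    LinearMap.smulRight_apply, lcoeff_apply, sub_eq_zero] at hx0
  exact hx0
lemma coeff_ee {n : ℕ} (k ℓ k' ℓ' : Fin n) :
    coeff (eExp k ℓ) (X (Sum.inr k') * X (Sum.inr ℓ') : MvPolynomial (Fin n ⊕ Fin n) ℝ) =
      if (k' = k ∧ ℓ' = ℓ) ∨ (k' = ℓ ∧ ℓ' = k) then 1 else 0 := by
  rw [ee_eq_monomial, coeff_monomial]
  simp only [eExp_inj]

lemma ker_coeffs {n : ℕ} {c : Fin n × Fin n → ℝ}
    (h : ∑ p : Fin n × Fin n, c p • ((1/2 : ℝ) • (X (Sum.inr p.1) * X (Sum.inr p.2)) :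
      MvPolynomial (Fin n ⊕ Fin n) ℝ) = 0) :
    (∀ k, c (k, k) = 0) ∧ ∀ k ℓ : Fin n, k ≠ ℓ → c (ℓ, k) = - c (k, ℓ) := by
  have H : ∀ k ℓ : Fin n, ∑ p : Fin n × Fin n,
      c p * ((1/2 : ℝ) * (if (p.1 = k ∧ p.2 = ℓ) ∨ (p.1 = ℓ ∧ p.2 = k) then 1 else 0)) = 0 := by
    intro k ℓ
    have h2 := congrArg (coeff (eExp k ℓ)) h
    rw [coeff_sum] at h2
    simpa [coeff_smul, coeff_ee, smul_eq_mul] using h2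
  constructor
  · intro k
    have h2 := H k k
    rw [Finset.sum_eq_single (k, k)] at h2
    · simp at h2
      exact h2
    · rintro ⟨a, b⟩ _ hne
      have : ¬ (((a, b).1 = k ∧ (a, b).2 = k) ∨ ((a, b).1 = k ∧ (a, b).2 = k)) := by
        simp only [Prod.mk.injEq, ne_eq] at hne ⊢
        tauto
      rw [if_neg this, mul_zero, mul_zero]
    · intro h3; exact absurd (Finset.mem_univ _) h3
  · intro k ℓ hkl
    have h2 := H k ℓ
    rw [← Finset.sum_subset (Finset.subset_univ ({(k, ℓ), (ℓ, k)} : Finset (Fin n × Fin n)))] at h2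
    · rw [Finset.sum_pair (by simp [Prod.ext_iff]; tauto)] at h2
      simp at h2
      linarith
    · rintro ⟨a, b⟩ _ hx
      simp only [Finset.mem_insert, Finset.mem_singleton, Prod.mk.injEq, not_or] at hx
      have : ¬ (((a, b).1 = k ∧ (a, b).2 = ℓ) ∨ ((a, b).1 = ℓ ∧ (a, b).2 = k)) := by
        simp only [not_or]
        tauto
      rw [if_neg this, mul_zero, mul_zero]
/-- the set of antisymmetric generators -/
def Kset (n : ℕ) : Set (MvPolynomial (Fin n ⊕ Fin n) ℝ) :=
  {x | ∃ k ℓ : Fin n, k < ℓ ∧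
    x = HI (Pi.single k 1) * eJ (Pi.single ℓ 1) - HI (Pi.single ℓ 1) * eJ (Pi.single k 1)}

lemma gen_eq {n : ℕ} (k ℓ : Fin n) :
    HI (Pi.single k 1) * eJ (Pi.single ℓ 1) - HI (Pi.single ℓ 1) * eJ (Pi.single k 1)
      = (2 : ℝ) • (bkl (k, ℓ) - bkl (ℓ, k)) := by
  rw [smul_sub, ← two_mul_smul, ← two_mul_smul]
  simp only [HI_single, eJ_single, bkl]
  ring

lemma part1 (n : ℕ) : HS n 1 1 ⊓ LinearMap.ker (acL n) = Submodule.span ℝ (Kset n) := by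
  apply le_antisymm
  · rintro x ⟨hxHS, hxker⟩
    set c : Fin n × Fin n → ℝ := fun p => coeff (mExp p.1 p.2) x with hc
    have hrep : x = ∑ p : Fin n × Fin n, c p • bkl p := repr_HS11 hxHS
    have hac : ∑ p : Fin n × Fin n,
        c p • ((1/2 : ℝ) • (X (Sum.inr p.1) * X (Sum.inr p.2)) :
          MvPolynomial (Fin n ⊕ Fin n) ℝ) = 0 := by
      have h0 : acL n x = 0 := hxker
      calc ∑ p : Fin n × Fin n,
            c p • ((1/2 : ℝ) • (X (Sum.inr p.1) * X (Sum.inr p.2)) :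
              MvPolynomial (Fin n ⊕ Fin n) ℝ)
          = ∑ p : Fin n × Fin n, c p • acL n (bkl p) := by
            refine Finset.sum_congr rfl fun p _ => ?_
            rw [bkl, acL_b]
        _ = acL n x := by rw [hrep, map_sum]; simp only [map_smul]
        _ = 0 := h0
    obtain ⟨hdiag, hskew⟩ := ker_coeffs hac
    have hnot : ∑ p ∈ Finset.univ.filter (fun p : Fin n × Fin n => ¬ p.1 < p.2),
        c p • bkl p = ∑ p ∈ Finset.univ.filter (fun p : Fin n × Fin n => p.2 < p.1),
        c p • bkl p := by
      refine (Finset.sum_subset ?_ ?_).symm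
      · intro p hp
        simp only [Finset.mem_filter, Finset.mem_univ, true_and] at hp ⊢
        exact not_lt_of_gt hp
      · intro p hp hnp
        simp only [Finset.mem_filter, Finset.mem_univ, true_and] at hp hnp
        have heq : p.1 = p.2 := le_antisymm (not_lt.mp hnp) (not_lt.mp hp)
        have : c p = 0 := by
          have := hdiag p.1
          rwa [show (p.1, p.1) = p by rw [Prod.ext_iff]; exact ⟨rfl, heq⟩] at this
        rw [this, zero_smul]
    have hswap : ∑ p ∈ Finset.univ.filter (fun p : Fin n × Fin n => p.2 < p.1),
        c p • bkl p = ∑ p ∈ Finset.univ.filter (fun p : Fin n × Fin n => p.1 < p.2),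
        (- c p) • bkl (p.2, p.1) := by
      refine Finset.sum_equiv (Equiv.prodComm (Fin n) (Fin n)) ?_ ?_
      · intro p
        simp [Equiv.prodComm]
      · intro p hp
        simp only [Finset.mem_filter, Finset.mem_univ, true_and] at hp
        have h1 : c (p.1, p.2) = - c (p.2, p.1) := hskew p.2 p.1 (ne_of_lt hp)
        rw [Prod.mk.eta] at h1
        show c p • bkl p = (- c (p.2, p.1)) • bkl (p.1, p.2)
        rw [← h1, Prod.mk.eta]
    have key : x = ∑ p ∈ Finset.univ.filter (fun p : Fin n × Fin n => p.1 < p.2),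
        c p • (bkl p - bkl (p.2, p.1)) := by
      rw [hrep, ← Finset.sum_filter_add_sum_filter_not Finset.univ
        (fun p : Fin n × Fin n => p.1 < p.2) (fun p => c p • bkl p), hnot, hswap,
        ← Finset.sum_add_distrib]
      refine Finset.sum_congr rfl fun p _ => ?_
      rw [smul_sub, neg_smul, sub_eq_add_neg]
    rw [key]
    refine Submodule.sum_mem _ fun p hp => ?_
    simp only [Finset.mem_filter, Finset.mem_univ, true_and] at hp
    have hmem : HI (Pi.single p.1 1) * eJ (Pi.single p.2 1)
        - HI (Pi.single p.2 1) * eJ (Pi.single p.1 1) ∈ Kset n := ⟨p.1, p.2, hp, rfl⟩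
    have hK := Submodule.subset_span (R := ℝ) hmem
    rw [gen_eq] at hK
    have h2 := Submodule.smul_mem _ ((1/2 : ℝ)) hK
    rw [smul_smul] at h2
    norm_num at h2
    exact Submodule.smul_mem _ (c p) h2
  · rw [Submodule.span_le]
    rintro _ ⟨k, ℓ, hlt, rfl⟩
    constructor
    · refine Submodule.sub_mem _ (Submodule.subset_span ?_) (Submodule.subset_span ?_)
      · exact ⟨Pi.single k 1, Pi.single ℓ 1, by simp [Finset.sum_pi_single'],
          by simp [Finset.sum_pi_single'], rfl⟩
      · exact ⟨Pi.single ℓ 1, Pi.single k 1, by simp [Finset.sum_pi_single'],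
          by simp [Finset.sum_pi_single'], rfl⟩
    · simp only [SetLike.mem_coe, LinearMap.mem_ker, gen_eq, map_smul, map_sub]
      rw [show bkl (k, ℓ) = X (Sum.inl k) * X (Sum.inr ℓ) from rfl,
        show bkl (ℓ, k) = X (Sum.inl ℓ) * X (Sum.inr k) from rfl, acL_b, acL_b,
        mul_comm (X (Sum.inr k))]
      simp
lemma part2 (n : ℕ) (k ℓ : Fin n) :
    aaL n (HI (Pi.single k 1) * eJ (Pi.single ℓ 1)
      - HI (Pi.single ℓ 1) * eJ (Pi.single k 1)) = 0 := by
  rw [gen_eq, map_smul, map_sub,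
    show bkl (k, ℓ) = X (Sum.inl k) * X (Sum.inr ℓ) from rfl,
    show bkl (ℓ, k) = X (Sum.inl ℓ) * X (Sum.inr k) from rfl, aaL_b, aaL_b]
  by_cases h : k = ℓ
  · subst h; simp
  · rw [if_neg h, if_neg (Ne.symm h)]
    simp

noncomputable def vFam (n : ℕ) (q : {p : Fin n × Fin n // p.1 < p.2}) :
    MvPolynomial (Fin n ⊕ Fin n) ℝ :=
  HI (Pi.single q.1.1 1) * eJ (Pi.single q.1.2 1)
    - HI (Pi.single q.1.2 1) * eJ (Pi.single q.1.1 1)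

lemma Kset_eq_range (n : ℕ) : Kset n = Set.range (vFam n) := by
  ext x
  constructor
  · rintro ⟨k, ℓ, hlt, rfl⟩
    exact ⟨⟨(k, ℓ), hlt⟩, rfl⟩
  · rintro ⟨q, rfl⟩
    exact ⟨q.1.1, q.1.2, q.2, rfl⟩

lemma vFam_li (n : ℕ) : LinearIndependent ℝ (vFam n) := by
  rw [Fintype.linearIndependent_iff]
  intro g hg i
  have hcoeff : ∀ q : {p : Fin n × Fin n // p.1 < p.2},
      coeff (mExp i.1.1 i.1.2) (vFam n q) = if q = i then 2 else 0 := by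
    intro q
    rw [vFam, gen_eq, coeff_smul, coeff_sub, coeff_bkl, coeff_bkl]
    have h2 : ¬ ((q.1.2, q.1.1) = (i.1.1, i.1.2)) := by
      rintro h
      rw [Prod.mk.injEq] at h
      have := i.2
      rw [← h.1, ← h.2] at this
      exact absurd (lt_trans q.2 this) (lt_irrefl _)
    rw [if_neg h2, sub_zero]
    by_cases hq : q = i
    · subst hq
      rw [if_pos (by rw [Prod.mk.eta])]
      norm_num
    · rw [if_neg (by rw [Prod.mk.eta]; exact fun h => hq (Subtype.ext h)), smul_zero, if_neg hq]
  have h3 := congrArg (coeff (mExp i.1.1 i.1.2)) hg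
  rw [coeff_sum, coeff_zero] at h3
  simp only [coeff_smul, hcoeff, smul_eq_mul, mul_ite, mul_zero, mul_one] at h3
  rw [Finset.sum_ite_eq' Finset.univ i (fun q => g q * 2)] at h3
  simp at h3
  exact h3

def ltEquiv (n : ℕ) : {p : Fin n × Fin n // p.1 < p.2} ≃ (Σ ℓ : Fin n, Fin ℓ.val) where
  toFun q := ⟨q.1.2, ⟨q.1.1.val, q.2⟩⟩
  invFun s := ⟨(⟨s.2.val, lt_trans s.2.isLt s.1.isLt⟩, s.1), s.2.isLt⟩
  left_inv q := rfl
  right_inv s := rfl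

lemma card_lt_pairs (n : ℕ) :
    Fintype.card {p : Fin n × Fin n // p.1 < p.2} = n.choose 2 := by
  rw [Fintype.card_congr (ltEquiv n), Fintype.card_sigma]
  simp only [Fintype.card_fin]
  rw [Fin.sum_univ_eq_sum_range (fun i => (i : ℕ)) n, Finset.sum_range_id, Nat.choose_two_right]

/-- on `𝓗¹ ⊗ S¹`, the kernel of `Ac` is spanned by the vectors
`H_k e^ℓ − H_ℓ e^k` (`k < ℓ`); these also lie in `ker Aa`, and
`dim (ker Aa ∩ ker Ac)` restricted to `𝓗¹ ⊗ S¹` equals `C(n,2)`. -/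
theorem stmt_14 (n : ℕ) :
    (HS n 1 1 ⊓ LinearMap.ker (acL n) =
      Submodule.span ℝ {x | ∃ k ℓ : Fin n, k < ℓ ∧
        x = HI (Pi.single k 1) * eJ (Pi.single ℓ 1)
          - HI (Pi.single ℓ 1) * eJ (Pi.single k 1)}) ∧
    (∀ k ℓ : Fin n,
      aaL n (HI (Pi.single k 1) * eJ (Pi.single ℓ 1)
        - HI (Pi.single ℓ 1) * eJ (Pi.single k 1)) = 0) ∧
    Module.finrank ℝ
        ↥(HS n 1 1 ⊓ LinearMap.ker (aaL n) ⊓ LinearMap.ker (acL n)) = n.choose 2 := by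
  refine ⟨part1 n, part2 n, ?_⟩
  have hker : Submodule.span ℝ (Kset n) ≤ LinearMap.ker (aaL n) := by
    rw [Submodule.span_le]
    rintro _ ⟨k, ℓ, _, rfl⟩
    exact part2 n k ℓ
  have heq : HS n 1 1 ⊓ LinearMap.ker (aaL n) ⊓ LinearMap.ker (acL n)
      = HS n 1 1 ⊓ LinearMap.ker (acL n) := by
    apply le_antisymm
    · exact inf_le_inf_right _ inf_le_left
    · refine le_inf (le_inf inf_le_left ?_) inf_le_right
      rw [← ge_iff_le]
      calc LinearMap.ker (aaL n) ≥ Submodule.span ℝ (Kset n) := hker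
        _ = HS n 1 1 ⊓ LinearMap.ker (acL n) := (part1 n).symm
  rw [heq, part1 n]
  rw [Kset_eq_range, finrank_span_eq_card (vFam_li n), card_lt_pairs]
end

section
/- For n ≥ 2, the kernel of the linear map Ac = Σ_k A_k ⊗ c_k : 𝓗¹⊗S² → 𝓗⁰⊗S³ has dimension n·C(n+1,2) − C(n+2,3), and the subspace K^{1,2} = ker(Aa) ∩ ker(Ac) ⊆ 𝓗¹⊗S² has dimension n·C(n+1,2) − C(n+2,3) − n; for n = 1 this intersection is zero. -/
/-!
In the basis `H_k e^J = 2 y_k e^J` of `𝓗¹ ⊗ S^p` (since `H_1(t) = 2t`), the operator `Ac`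
sends `H_k e^J` to `e^{J + e_k}` and `Aa` sends it to `J_k e^{J - e_k}`. Hence `Ac` maps
`𝓗¹ ⊗ S^p` onto `𝓗⁰ ⊗ S^{p+1}`, and rank–nullity gives `dim ker Ac`. For `n ≥ 2` and `k ≠ ℓ`
the vector `u_{kℓ} = H_k e^k e^ℓ − H_ℓ e^k e^k` lies in `ker Ac` with `Aa u_{kℓ} = e^ℓ`, so
`Aa` maps `ker Ac` onto `𝓗⁰ ⊗ S¹` and rank–nullity gives `dim K^{1,2}`. For `n = 1` both
`𝓗¹ ⊗ S²` and `𝓗⁰ ⊗ S³` are one-dimensional, so already `ker Ac = 0`.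
-/

open MvPolynomial

lemma exists_eq_single_of_sum_eq_one {ι : Type*} [Fintype ι] [DecidableEq ι] {I : ι → ℕ}
    (h : ∑ i, I i = 1) : ∃ k, I = Pi.single k 1 := by
  obtain ⟨k, hk⟩ := (Finsupp.sum_eq_one_iff (Finsupp.equivFunOnFinite.symm I)).1 <| by
    rwa [Finsupp.sum_fintype _ _ fun _ => rfl]
  exact ⟨k, by simpa [Finsupp.single_eq_pi_single] using congrArg (⇑) hk⟩

lemma sum_add_single_one {ι : Type*} [Fintype ι] [DecidableEq ι] (J : ι → ℕ) (k : ι) :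
    ∑ i, (J + Pi.single k 1 : ι → ℕ) i = ∑ i, J i + 1 := by
  simp [Finset.sum_add_distrib]

lemma sub_single_one_add_single_one {ι : Type*} [DecidableEq ι] {J : ι → ℕ} {k : ι}
    (hk : J k ≠ 0) : J - Pi.single k 1 + Pi.single k 1 = J :=
  tsub_add_cancel_of_le <| by
    intro i
    rcases eq_or_ne i k with rfl | h
    · simpa using Nat.one_le_iff_ne_zero.2 hk
    · simp [h]

lemma sum_sub_single_one {ι : Type*} [Fintype ι] [DecidableEq ι] {J : ι → ℕ} {k : ι}
    (hk : J k ≠ 0) : ∑ i, (J - Pi.single k 1 : ι → ℕ) i = ∑ i, J i - 1 := by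
  have := sum_add_single_one (J - Pi.single k 1) k
  rw [sub_single_one_add_single_one hk] at this
  omega

abbrev MultiIndex (n p : ℕ) : Type := {J : Fin n → ℕ // ∑ i, J i = p}

noncomputable instance (n p : ℕ) : Fintype (MultiIndex n p) :=
  Fintype.ofEquiv _ (Sym.equivNatSumOfFintype (Fin n) p)

lemma card_multiIndex (n p : ℕ) : Fintype.card (MultiIndex n p) = (n + p - 1).choose p := by
  rw [← Fintype.card_congr (Sym.equivNatSumOfFintype (Fin n) p), Sym.card_sym_eq_choose,
    Fintype.card_fin]

noncomputable def yeExponent {n : ℕ} (I J : Fin n → ℕ) : Fin n ⊕ Fin n →₀ ℕ :=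
  Finsupp.equivFunOnFinite.symm (Sum.elim I J)

@[simp] lemma yeExponent_inl {n : ℕ} (I J : Fin n → ℕ) (i : Fin n) :
    yeExponent I J (Sum.inl i) = I i := rfl

@[simp] lemma yeExponent_inr {n : ℕ} (I J : Fin n → ℕ) (i : Fin n) :
    yeExponent I J (Sum.inr i) = J i := rfl

lemma yeExponent_add {n : ℕ} (I J I' J' : Fin n → ℕ) :
    yeExponent I J + yeExponent I' J' = yeExponent (I + I') (J + J') := by
  ext (i | i) <;> rfl

lemma yeExponent_sub {n : ℕ} (I J I' J' : Fin n → ℕ) :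
    yeExponent I J - yeExponent I' J' = yeExponent (I - I') (J - J') := by
  ext (i | i) <;> rfl

lemma single_inl_eq_yeExponent {n : ℕ} (k : Fin n) :
    Finsupp.single (Sum.inl k) 1 = yeExponent (Pi.single k 1) 0 := by
  ext (i | i) <;> simp [Finsupp.single_apply, Pi.single_apply, eq_comm]

lemma single_inr_eq_yeExponent {n : ℕ} (k : Fin n) :
    Finsupp.single (Sum.inr k) 1 = yeExponent 0 (Pi.single k 1) := by
  ext (i | i) <;> simp [Finsupp.single_apply, Pi.single_apply, eq_comm]

lemma yeExponent_inj {n : ℕ} {I J I' J' : Fin n → ℕ} :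
    yeExponent I J = yeExponent I' J' ↔ I = I' ∧ J = J' := by
  refine ⟨fun h => ⟨funext fun i => ?_, funext fun i => ?_⟩, fun h => h.1 ▸ h.2 ▸ rfl⟩
  · exact DFunLike.congr_fun h (Sum.inl i)
  · exact DFunLike.congr_fun h (Sum.inr i)

lemma eJ_eq_monomial {n : ℕ} (J : Fin n → ℕ) : eJ J = monomial (yeExponent 0 J) (1 : ℝ) := by
  rw [monomial_eq, Finsupp.prod_fintype _ _ fun _ => pow_zero _, Fintype.prod_sum_type]
  simp [eJ]

lemma physHermite_one : physHermite 1 = 2 * Polynomial.X := by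
  simp [physHermite]

lemma HI_zero (n : ℕ) : HI (0 : Fin n → ℕ) = 1 := by
  simp [HI, physHermite]

lemma HI_single_mul_eJ {n : ℕ} (k : Fin n) (J : Fin n → ℕ) :
    HI (Pi.single k 1) * eJ J = monomial (yeExponent (Pi.single k 1) J) (2 : ℝ) := by
  have hHI : HI (Pi.single k 1) = monomial (Finsupp.single (Sum.inl k) 1) (2 : ℝ) := by
    rw [HI, Finset.prod_eq_single k (fun i _ hik => by simp [Pi.single_eq_of_ne hik, physHermite])
      (by simp)]
    simp [physHermite_one, ← C_mul_X_eq_monomial, map_ofNat]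
  rw [hHI, eJ_eq_monomial, monomial_mul, mul_one, single_inl_eq_yeExponent, yeExponent_add,
    add_zero, zero_add]

lemma linearIndependent_monomial_comp {σ ι K : Type*} [Field K] {d : ι → σ →₀ ℕ}
    (hd : Function.Injective d) {c : K} (hc : c ≠ 0) :
    LinearIndependent K fun i => (monomial (d i) c : MvPolynomial σ K) := by
  have h : LinearIndependent K fun i => (monomial (d i) 1 : MvPolynomial σ K) :=
    (basisMonomials σ K).linearIndependent.comp d hd
  have hc' : (fun i => (monomial (d i) c : MvPolynomial σ K)) =
      (fun _ : ι => Units.mk0 c hc) • fun i => (monomial (d i) 1 : MvPolynomial σ K) := by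
    ext1 i
    simp [smul_monomial]
  rw [hc']
  exact h.units_smul _

lemma HS_zero_eq_span (n p : ℕ) :
    HS n 0 p = Submodule.span ℝ (Set.range fun J : MultiIndex n p => eJ J.1) := by
  refine congrArg _ (Set.ext fun x => ⟨?_, ?_⟩)
  · rintro ⟨I, J, hI, hJ, rfl⟩
    rw [Fintype.sum_eq_zero_iff_of_nonneg (fun _ => Nat.zero_le _)] at hI
    exact ⟨⟨J, hJ⟩, by rw [hI, HI_zero, one_mul]⟩
  · rintro ⟨J, rfl⟩
    exact ⟨0, J.1, by simp, J.2, by rw [HI_zero, one_mul]⟩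

lemma HS_one_eq_span (n p : ℕ) :
    HS n 1 p = Submodule.span ℝ
      (Set.range fun t : Fin n × MultiIndex n p => HI (Pi.single t.1 1) * eJ t.2.1) := by
  refine congrArg _ (Set.ext fun x => ⟨?_, ?_⟩)
  · rintro ⟨I, J, hI, hJ, rfl⟩
    obtain ⟨k, rfl⟩ := exists_eq_single_of_sum_eq_one hI
    exact ⟨(k, ⟨J, hJ⟩), rfl⟩
  · rintro ⟨⟨k, J⟩, rfl⟩
    exact ⟨Pi.single k 1, J.1, by simp, J.2, rfl⟩

lemma finrank_HS_zero (n p : ℕ) : Module.finrank ℝ (HS n 0 p) = (n + p - 1).choose p := by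
  have hli : LinearIndependent ℝ fun J : MultiIndex n p => eJ J.1 := by
    simp_rw [eJ_eq_monomial]
    exact linearIndependent_monomial_comp (d := fun J : MultiIndex n p => yeExponent 0 J.1)
      (fun J J' h => Subtype.ext (yeExponent_inj.1 h).2) one_ne_zero
  rw [HS_zero_eq_span, finrank_span_eq_card hli, card_multiIndex]

lemma finrank_HS_one (n p : ℕ) :
    Module.finrank ℝ (HS n 1 p) = n * (n + p - 1).choose p := by
  have hli : LinearIndependent ℝ
      fun t : Fin n × MultiIndex n p => HI (Pi.single t.1 1) * eJ t.2.1 := by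
    simp_rw [HI_single_mul_eJ]
    refine linearIndependent_monomial_comp
      (d := fun t : Fin n × MultiIndex n p => yeExponent (Pi.single t.1 1) t.2.1)
      (fun t t' h => ?_) two_ne_zero
    obtain ⟨h₁, h₂⟩ := yeExponent_inj.1 h
    exact Prod.ext (by simpa [Pi.single_apply] using congrFun h₁ t.1) (Subtype.ext h₂)
  rw [HS_one_eq_span, finrank_span_eq_card hli, Fintype.card_prod, Fintype.card_fin,
    card_multiIndex]

instance (n p : ℕ) : FiniteDimensional ℝ (HS n 1 p) := by
  rw [HS_one_eq_span]
  exact FiniteDimensional.span_of_finite ℝ (Set.finite_range _)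

lemma acL_monomial {n : ℕ} (I J : Fin n → ℕ) (c : ℝ) :
    acL n (monomial (yeExponent I J) c) =
      ∑ m, monomial (yeExponent (I - Pi.single m 1) (J + Pi.single m 1)) (c * I m / 2) := by
  simp only [acL, LinearMap.sum_apply, LinearMap.smul_apply,
    LinearMap.comp_apply, LinearMap.mulLeft_apply, Derivation.coeFn_coe]
  refine Finset.sum_congr rfl fun m _ => ?_
  rw [← pow_one (X _), ← monomial_single_add, pderiv_monomial, smul_monomial,
    single_inl_eq_yeExponent, single_inr_eq_yeExponent, yeExponent_add, yeExponent_sub]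
  simp only [zero_add, tsub_zero, add_comm (Pi.single m 1)]
  congr 1
  simp
  ring

lemma aaL_monomial {n : ℕ} (I J : Fin n → ℕ) (c : ℝ) :
    aaL n (monomial (yeExponent I J) c) =
      ∑ m, monomial (yeExponent (I - Pi.single m 1) (J - Pi.single m 1)) (c * J m * I m / 2) := by
  simp only [aaL, LinearMap.sum_apply, LinearMap.smul_apply,
    LinearMap.comp_apply, Derivation.coeFn_coe]
  refine Finset.sum_congr rfl fun m _ => ?_
  rw [pderiv_monomial, pderiv_monomial, smul_monomial,
    single_inl_eq_yeExponent, single_inr_eq_yeExponent, yeExponent_sub, yeExponent_sub]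
  simp only [tsub_zero]
  congr 1
  simp
  ring

lemma acL_HI_single_mul_eJ {n : ℕ} (k : Fin n) (J : Fin n → ℕ) :
    acL n (HI (Pi.single k 1) * eJ J) = eJ (J + Pi.single k 1) := by
  rw [HI_single_mul_eJ, acL_monomial, Finset.sum_eq_single k
    (fun m _ hm => by simp [Pi.single_eq_of_ne hm]) (by simp), eJ_eq_monomial]
  simp

lemma aaL_HI_single_mul_eJ {n : ℕ} (k : Fin n) (J : Fin n → ℕ) :
    aaL n (HI (Pi.single k 1) * eJ J) = (J k : ℝ) • eJ (J - Pi.single k 1) := by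
  rw [HI_single_mul_eJ, aaL_monomial, Finset.sum_eq_single k
    (fun m _ hm => by simp [Pi.single_eq_of_ne hm]) (by simp), eJ_eq_monomial, smul_monomial]
  simp

lemma LinearMap.finrank_map_add_finrank_inf_ker {K V W : Type*} [DivisionRing K]
    [AddCommGroup V] [Module K V] [AddCommGroup W] [Module K W] (f : V →ₗ[K] W)
    (p : Submodule K V) [FiniteDimensional K p] :
    Module.finrank K (p.map f) + Module.finrank K ↥(p ⊓ LinearMap.ker f) =
      Module.finrank K p := by
  rw [← LinearMap.range_domRestrict, ← LinearMap.finrank_range_add_finrank_ker (f.domRestrict p),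
    LinearMap.ker_domRestrict]
  congr 1
  have h : (LinearMap.ker f).comap p.subtype = (p ⊓ LinearMap.ker f).comap p.subtype := by
    rw [Submodule.comap_inf, Submodule.comap_subtype_self, top_inf_eq]
  rw [h]
  exact (Submodule.comapSubtypeEquivOfLe (p := p ⊓ LinearMap.ker f) inf_le_left).finrank_eq.symm

lemma HI_single_mul_eJ_mem_HS {n p : ℕ} (k : Fin n) {J : Fin n → ℕ} (hJ : ∑ i, J i = p) :
    HI (Pi.single k 1) * eJ J ∈ HS n 1 p :=
  Submodule.subset_span ⟨Pi.single k 1, J, by simp, hJ, rfl⟩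

lemma eJ_mem_HS {n p : ℕ} {J : Fin n → ℕ} (hJ : ∑ i, J i = p) : eJ J ∈ HS n 0 p :=
  Submodule.subset_span ⟨0, J, by simp, hJ, by rw [HI_zero, one_mul]⟩

lemma map_acL_HS_one (n p : ℕ) : (HS n 1 p).map (acL n) = HS n 0 (p + 1) := by
  refine le_antisymm ?_ ?_
  · rw [HS_one_eq_span, Submodule.map_span_le]
    rintro _ ⟨⟨k, J, hJ⟩, rfl⟩
    rw [acL_HI_single_mul_eJ]
    exact eJ_mem_HS (by rw [sum_add_single_one, hJ])
  · rw [HS_zero_eq_span, Submodule.span_le]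
    rintro _ ⟨⟨M, hM⟩, rfl⟩
    obtain ⟨k, hk⟩ : ∃ k, M k ≠ 0 := by
      by_contra! h
      simp [h] at hM
    have hM' : ∑ i, (M - Pi.single k 1 : Fin n → ℕ) i = p := by
      rw [sum_sub_single_one hk, hM, Nat.add_sub_cancel]
    refine ⟨_, HI_single_mul_eJ_mem_HS k hM', ?_⟩
    rw [acL_HI_single_mul_eJ, sub_single_one_add_single_one hk]

lemma map_aaL_HS_one_le (n p : ℕ) : (HS n 1 (p + 1)).map (aaL n) ≤ HS n 0 p := by
  rw [HS_one_eq_span, Submodule.map_span_le]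
  rintro _ ⟨⟨k, J, hJ⟩, rfl⟩
  rw [aaL_HI_single_mul_eJ]
  obtain hk | hk := eq_or_ne (J k) 0
  · simp [hk]
  · refine Submodule.smul_mem _ _ (eJ_mem_HS ?_)
    rw [sum_sub_single_one hk, hJ, Nat.add_sub_cancel]

lemma finrank_inf_ker_acL_add (n p : ℕ) :
    Module.finrank ℝ ↥(HS n 1 p ⊓ LinearMap.ker (acL n)) + (n + p).choose (p + 1) =
      n * (n + p - 1).choose p := by
  rw [← finrank_HS_one, ← (acL n).finrank_map_add_finrank_inf_ker (HS n 1 p), map_acL_HS_one,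
    finrank_HS_zero, add_comm, ← add_assoc, Nat.add_sub_cancel]

lemma exists_mem_inf_ker_acL_aaL_eq {n : ℕ} {k ℓ : Fin n} (hkℓ : k ≠ ℓ) :
    ∃ u ∈ HS n 1 2 ⊓ LinearMap.ker (acL n), aaL n u = eJ (Pi.single ℓ 1) := by
  have h₁ : ∑ i, (Pi.single k 1 + Pi.single ℓ 1 : Fin n → ℕ) i = 2 := by
    simp [Finset.sum_add_distrib]
  have h₂ : ∑ i, (Pi.single k 2 : Fin n → ℕ) i = 2 := by simp
  refine ⟨HI (Pi.single k 1) * eJ (Pi.single k 1 + Pi.single ℓ 1) -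
    HI (Pi.single ℓ 1) * eJ (Pi.single k 2),
    Submodule.mem_inf.2 ⟨sub_mem (HI_single_mul_eJ_mem_HS k h₁) (HI_single_mul_eJ_mem_HS ℓ h₂),
      LinearMap.mem_ker.2 ?_⟩, ?_⟩
  · rw [map_sub, acL_HI_single_mul_eJ, acL_HI_single_mul_eJ, sub_eq_zero,
      show (2 : ℕ) = 1 + 1 from rfl, Pi.single_add, add_right_comm]
  · rw [map_sub, aaL_HI_single_mul_eJ, aaL_HI_single_mul_eJ, add_tsub_cancel_left]
    simp [Pi.single_eq_of_ne hkℓ, Pi.single_eq_of_ne hkℓ.symm]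

lemma map_aaL_inf_ker_acL {n : ℕ} (hn : 2 ≤ n) :
    (HS n 1 2 ⊓ LinearMap.ker (acL n)).map (aaL n) = HS n 0 1 := by
  refine le_antisymm ((Submodule.map_mono inf_le_left).trans (map_aaL_HS_one_le n 1)) ?_
  rw [HS_zero_eq_span, Submodule.span_le]
  rintro _ ⟨⟨J, hJ⟩, rfl⟩
  obtain ⟨ℓ, rfl⟩ := exists_eq_single_of_sum_eq_one hJ
  obtain ⟨k, hkℓ⟩ := Fintype.exists_ne_of_one_lt_card (by rwa [Fintype.card_fin]) ℓ
  exact exists_mem_inf_ker_acL_aaL_eq hkℓ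

lemma finrank_inf_ker_aaL_add {n : ℕ} (hn : 2 ≤ n) :
    Module.finrank ℝ ↥(HS n 1 2 ⊓ LinearMap.ker (aaL n) ⊓ LinearMap.ker (acL n)) + n =
      Module.finrank ℝ ↥(HS n 1 2 ⊓ LinearMap.ker (acL n)) := by
  have : FiniteDimensional ℝ ↥(HS n 1 2 ⊓ LinearMap.ker (acL n)) :=
    Submodule.finiteDimensional_of_le inf_le_left
  rw [← (aaL n).finrank_map_add_finrank_inf_ker (HS n 1 2 ⊓ LinearMap.ker (acL n)),
    map_aaL_inf_ker_acL hn, finrank_HS_zero, inf_right_comm, add_comm]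
  simp

/-- for `n ≥ 2`, `ker Ac ⊆ 𝓗¹⊗S²` has dimension
`n·C(n+1,2) − C(n+2,3)` and `K^{1,2} = ker Aa ∩ ker Ac ⊆ 𝓗¹⊗S²` has dimension
`n·C(n+1,2) − C(n+2,3) − n`; for `n = 1` the intersection is zero. -/
theorem stmt_15 (n : ℕ) :
    (2 ≤ n →
      Module.finrank ℝ ↥(HS n 1 2 ⊓ LinearMap.ker (acL n)) =
        n * (n + 1).choose 2 - (n + 2).choose 3 ∧
      Module.finrank ℝ
          ↥(HS n 1 2 ⊓ LinearMap.ker (aaL n) ⊓ LinearMap.ker (acL n)) =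
        n * (n + 1).choose 2 - (n + 2).choose 3 - n) ∧
    (n = 1 → HS n 1 2 ⊓ LinearMap.ker (aaL n) ⊓ LinearMap.ker (acL n) = ⊥) := by
  have hAc : Module.finrank ℝ ↥(HS n 1 2 ⊓ LinearMap.ker (acL n)) + (n + 2).choose 3 =
      n * (n + 1).choose 2 := finrank_inf_ker_acL_add n 2
  refine ⟨fun hn => ?_, fun hn => ?_⟩
  · have hAa := finrank_inf_ker_aaL_add hn
    omega
  · subst hn
    have hbot : HS 1 1 2 ⊓ LinearMap.ker (acL 1) = ⊥ :=
      Submodule.finrank_eq_zero.1 (by simpa using hAc)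
    exact eq_bot_iff.2 (hbot ▸ inf_le_inf_right _ inf_le_left)
end
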